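/- Projection lemma consequence: for an alternal mould M over an alphabet A embedded in the free associative algebra K⟨A⟩, the element Σ_a M^a · a equals Σ_{r≥1} (1/r) Σ_{a ∈ A*_r} M^a [[...[[a₁,a₂],a₃],...],a_r], i.e. in each homogeneous degree r the image under the Dynkin-type map ψ(a₁...a_r) = (1/r)[[...[a₁,a₂],...],a_r] coincides with the original element. -/
import Mathlib


/-- The shuffle product of two words, as a multiset of words (with multiplicity). -/
def shuffle {A : Type*} : List A → List A → Multiset (List A)
  | [], b => {b}
  | x :: a, [] => {x :: a}
  | x :: a, y :: b =>
      (shuffle a (y :: b)).map (x :: ·) + (shuffle (x :: a) b).map (y :: ·)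
termination_by a b => a.length + b.length
decreasing_by all_goals simp [List.length_cons]

/-- Alternality of a mould. -/
def Alternal {A K : Type*} [Field K] (M : List A → K) : Prop :=
  M [] = 0 ∧ ∀ a b : List A, a ≠ [] → b ≠ [] → ((shuffle a b).map M).sum = 0

/-- A word `a₁⋯a_r` viewed as the product `a₁⋯a_r` in the free associative algebra. -/
noncomputable def wordProd (K : Type*) [Field K] {A : Type*} (a : List A) :
    FreeAlgebra K A :=
  (a.map (FreeAlgebra.ι K)).prod

/-- The left-nested Lie bracket `[[⋯[[a₁,a₂],a₃],⋯],a_r]` of a word, with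
`[x,y] = xy − yx` in the free associative algebra. -/
noncomputable def dynkinBracket (K : Type*) [Field K] {A : Type*} : List A → FreeAlgebra K A
  | [] => 0
  | x :: t => t.foldl
      (fun acc y => acc * FreeAlgebra.ι K y - FreeAlgebra.ι K y * acc) (FreeAlgebra.ι K x)

section msum
variable {α β V : Type*} [AddCommMonoid V]

/-- Sum of a function over a multiset. -/
def msum (s : Multiset α) (f : α → V) : V := (s.map f).sum

@[simp] lemma msum_zero (f : α → V) : msum (0 : Multiset α) f = 0 := rfl

@[simp] lemma msum_cons (a : α) (s : Multiset α) (f : α → V) :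
    msum (a ::ₘ s) f = f a + msum s f := by simp [msum]

@[simp] lemma msum_singleton (a : α) (f : α → V) : msum ({a} : Multiset α) f = f a := by
  simp [msum]

@[simp] lemma msum_zero_fun (s : Multiset α) : msum s (fun _ => (0 : V)) = 0 := by
  simp [msum, Multiset.map_const', Multiset.sum_replicate]

lemma msum_addm (s t : Multiset α) (f : α → V) :
    msum (s + t) f = msum s f + msum t f := by simp [msum]

lemma msum_add (s : Multiset α) (f g : α → V) :
    msum s (fun a => f a + g a) = msum s f + msum s g := by
  simp [msum, Multiset.sum_map_add]

lemma msum_map (s : Multiset α) (g : α → β) (f : β → V) :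
    msum (s.map g) f = msum s (fun a => f (g a)) := by
  simp only [msum, Multiset.map_map]
  rfl

lemma msum_bind (s : Multiset α) (g : α → Multiset β) (f : β → V) :
    msum (s.bind g) f = msum s (fun a => msum (g a) f) := by
  simp [msum, Multiset.map_bind, Multiset.sum_bind]

lemma msum_congr {s : Multiset α} {f g : α → V} (h : ∀ a ∈ s, f a = g a) :
    msum s f = msum s g := by
  unfold msum; rw [Multiset.map_congr rfl h]

lemma msum_comm (s : Multiset α) (t : Multiset β) (f : α → β → V) :
    msum s (fun a => msum t (fun b => f a b)) = msum t (fun b => msum s (fun a => f a b)) := by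
  induction s using Multiset.induction_on with
  | empty => simp [msum]
  | cons a s ih => simp [ih, msum_add]

variable {K : Type*} [Semiring K] [Module K V]

lemma msum_smul (s : Multiset α) (c : K) (f : α → V) :
    msum s (fun a => c • f a) = c • msum s f := by
  induction s using Multiset.induction_on with
  | empty => simp
  | cons a s ih => simp [ih, smul_add]

lemma msum_smul_const (s : Multiset α) (g : α → K) (W : V) :
    msum s (fun a => g a • W) = (msum s g) • W := by
  induction s using Multiset.induction_on with
  | empty => simp
  | cons a s ih => simp [ih, add_smul]

end msum

lemma msum_mul_right {α R : Type*} [NonUnitalNonAssocSemiring R] (s : Multiset α)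
    (f : α → R) (c : R) : msum s (fun a => f a * c) = msum s f * c := by
  simp [msum, Multiset.sum_map_mul_right]

lemma msum_mul_left {α R : Type*} [NonUnitalNonAssocSemiring R] (s : Multiset α)
    (f : α → R) (c : R) : msum s (fun a => c * f a) = c * msum s f := by
  simp [msum, Multiset.sum_map_mul_left]

lemma msum_sub {α V : Type*} [AddCommGroup V] (s : Multiset α) (f g : α → V) :
    msum s (fun a => f a - g a) = msum s f - msum s g := by
  induction s using Multiset.induction_on with
  | empty => simp
  | cons a s ih => simp [ih]; abel

lemma msum_range_const {V : Type*} [AddCommMonoid V] (n : ℕ) (c : V) :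
    msum (Multiset.range n) (fun _ => c) = n • c := by
  simp [msum, Multiset.map_const', Multiset.sum_replicate]

section words
variable {A : Type*} [Fintype A]

/-- The multiset of all words of length `n`. -/
def words (A : Type*) [Fintype A] : ℕ → Multiset (List A)
  | 0 => {[]}
  | n+1 => (Finset.univ.val : Multiset A).bind fun x => (words A n).map (x :: ·)

lemma length_of_mem_words : ∀ n, ∀ w ∈ words A n, w.length = n := by
  intro n
  induction n with
  | zero => intro w hw; simp [words] at hw; simp [hw]
  | succ n ih =>
    intro w hw
    simp only [words, Multiset.mem_bind, Multiset.mem_map] at hw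
    obtain ⟨x, -, t, ht, rfl⟩ := hw
    simp [ih t ht]

lemma msum_words_succ {V : Type*} [AddCommMonoid V] (n : ℕ) (f : List A → V) :
    msum (words A (n+1)) f = msum (Finset.univ.val : Multiset A)
      (fun x => msum (words A n) (fun t => f (x :: t))) := by
  rw [words, msum_bind]
  exact msum_congr (fun x _ => msum_map _ _ _)

lemma sum_eq_msum_words {V : Type*} [AddCommMonoid V] (r : ℕ) (f : List A → V) :
    ∑ g : Fin r → A, f (List.ofFn g) = msum (words A r) f := by
  induction r generalizing f with
  | zero => simp [words, List.ofFn_zero]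
  | succ n ih =>
    rw [msum_words_succ]
    rw [← (Fin.consEquiv (fun _ : Fin (n+1) => A)).sum_comp (fun g => f (List.ofFn g))]
    rw [Fintype.sum_prod_type]
    rw [show (msum (Finset.univ.val : Multiset A)
      (fun x => msum (words A n) (fun t => f (x :: t)))) =
      ∑ x : A, msum (words A n) (fun t => f (x :: t)) from rfl]
    refine Finset.sum_congr rfl (fun x _ => ?_)
    rw [← ih (fun t => f (x :: t))]
    
    refine Finset.sum_congr rfl (fun g _ => ?_)
    congr 1
    simp [Fin.consEquiv, List.ofFn_succ]
end words

/-- All ways to split a word into a subword and its complement. -/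
def splits {A : Type*} : List A → Multiset (List A × List A)
  | [] => {([], [])}
  | y :: t => ((splits t).map fun ab => (y :: ab.1, ab.2))
      + ((splits t).map fun ab => (ab.1, y :: ab.2))

lemma splits_snoc {A : Type*} (t : List A) (y : A) :
    splits (t ++ [y]) = ((splits t).map fun ab => (ab.1 ++ [y], ab.2))
      + ((splits t).map fun ab => (ab.1, ab.2 ++ [y])) := by
  induction t with
  | nil => simp [splits]
  | cons z t ih =>
    rw [List.cons_append, splits, ih, splits]
    simp only [Multiset.map_add, Multiset.map_map, Function.comp_def, List.cons_append]
    abel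

section wp
variable (K : Type*) [Field K] {A : Type*}

@[simp] lemma wordProd_nil : wordProd K ([] : List A) = 1 := rfl

@[simp] lemma wordProd_cons (x : A) (t : List A) :
    wordProd K (x :: t) = FreeAlgebra.ι K x * wordProd K t := by
  simp [wordProd]

lemma wordProd_append (s t : List A) :
    wordProd K (s ++ t) = wordProd K s * wordProd K t := by
  simp [wordProd]

lemma dynkinBracket_snoc (x : A) (t : List A) (y : A) :
    dynkinBracket K (x :: (t ++ [y])) =
      dynkinBracket K (x :: t) * FreeAlgebra.ι K y
        - FreeAlgebra.ι K y * dynkinBracket K (x :: t) := by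
  simp [dynkinBracket, List.foldl_append]

lemma dynkin_expand (x : A) (t : List A) :
    dynkinBracket K (x :: t) =
      msum (splits t) (fun ab =>
        ((-1 : K) ^ ab.1.length) • wordProd K (ab.1.reverse ++ x :: ab.2)) := by
  induction t using List.reverseRecOn with
  | nil => simp [splits, dynkinBracket]
  | append_singleton t y ih =>
    rw [dynkinBracket_snoc, ih, splits_snoc, msum_addm, msum_map, msum_map, ← msum_add]
    have h : ∀ ab ∈ splits t,
        ((-1 : K) ^ (ab.1 ++ [y]).length) • wordProd K ((ab.1 ++ [y]).reverse ++ x :: ab.2)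
          + ((-1 : K) ^ ab.1.length) • wordProd K (ab.1.reverse ++ x :: (ab.2 ++ [y]))
        = (((-1 : K) ^ ab.1.length) • wordProd K (ab.1.reverse ++ x :: ab.2))
            * FreeAlgebra.ι K y
          - FreeAlgebra.ι K y
            * (((-1 : K) ^ ab.1.length) • wordProd K (ab.1.reverse ++ x :: ab.2)) := by
      intro ab _
      simp only [List.reverse_append, List.reverse_cons, List.reverse_nil, List.nil_append,
        List.length_append, List.length_cons, List.length_nil, pow_succ, List.cons_append]
      rw [show ab.1.reverse ++ x :: (ab.2 ++ [y]) = (ab.1.reverse ++ x :: ab.2) ++ [y] by simp]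
      rw [wordProd_append, wordProd_cons, wordProd_cons, wordProd_nil, mul_one]
      rw [smul_mul_assoc, mul_smul_comm]
      rw [mul_comm ((-1:K) ^ ab.1.length) (-1), mul_smul, neg_one_smul]
      abel
    rw [msum_congr h, msum_sub, msum_mul_right, msum_mul_left]
end wp

section shuf
variable {A : Type*}

@[simp] lemma shuffle_nil_left (b : List A) : shuffle ([] : List A) b = {b} := by
  simp [shuffle]

@[simp] lemma shuffle_nil_right (a : List A) : shuffle a ([] : List A) = {a} := by
  cases a with
  | nil => simp [shuffle]
  | cons x a => simp [shuffle]

/-- The part of a shuffle where the first letter comes from the first word. -/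
def partA : List A → List A → Multiset (List A)
  | [], _ => 0
  | y :: a, b => (shuffle a b).map (y :: ·)

/-- The part of a shuffle where the first letter comes from the second word. -/
def partB : List A → List A → Multiset (List A)
  | _, [] => 0
  | a, z :: b => (shuffle a b).map (z :: ·)

lemma shuffle_eq_parts (a b : List A) (h : a ≠ [] ∨ b ≠ []) :
    shuffle a b = partA a b + partB a b := by
  match a, b with
  | [], [] => simp at h
  | [], z :: b => simp [partA, partB, shuffle]
  | y :: a, [] => simp [partA, partB, shuffle]
  | y :: a, z :: b => rw [shuffle]; rfl

lemma mrange_succ' (n : ℕ) :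
    Multiset.range (n + 1) = 0 ::ₘ (Multiset.range n).map (· + 1) := by
  show ((List.range (n + 1) : List ℕ) : Multiset ℕ) = _
  rw [List.range_succ_eq_map]
  simp only [Multiset.range, Nat.succ_eq_add_one, List.map_id']
  rfl

end shuf

section exchange
variable {A V : Type*} [Fintype A] [AddCommMonoid V]

lemma splits_to_shuffles :
    ∀ (n : ℕ) (F : List A → List A → List A → V),
    msum (words A n) (fun t => msum (splits t) (fun ab => F ab.1 ab.2 t))
      = msum (Multiset.range (n+1)) (fun k => msum (words A k) (fun a =>
          msum (words A (n-k)) (fun b => msum (shuffle a b) (fun u => F a b u)))) := by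
  intro n
  induction n with
  | zero =>
    intro F
    show msum {([] : List A)} _ = msum (Multiset.range 1) _
    rw [show Multiset.range 1 = {0} from rfl]
    simp [splits, words]
  | succ n ih =>
    intro F
    rw [msum_words_succ]
    have lhs_eq : ∀ y ∈ (Finset.univ.val : Multiset A),
        msum (words A n) (fun t => msum (splits (y :: t)) (fun ab => F ab.1 ab.2 (y :: t)))
        = msum (Multiset.range (n+1)) (fun k => msum (words A k) (fun a =>
            msum (words A (n-k)) (fun b => msum (shuffle a b) (fun u => F (y::a) b (y::u)))))
          + msum (Multiset.range (n+1)) (fun k => msum (words A k) (fun a =>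
            msum (words A (n-k)) (fun b => msum (shuffle a b) (fun u => F a (y::b) (y::u))))) := by
      intro y _
      rw [← ih (fun a b t => F (y::a) b (y::t)), ← ih (fun a b t => F a (y::b) (y::t)),
        ← msum_add]
      refine msum_congr (fun t _ => ?_)
      rw [show splits (y :: t) = ((splits t).map fun ab => (y :: ab.1, ab.2))
        + ((splits t).map fun ab => (ab.1, y :: ab.2)) from rfl]
      rw [msum_addm, msum_map, msum_map]
    rw [msum_congr lhs_eq, msum_add]
    -- Right-hand side: split each shuffle by the origin of its first letter
    have rhs_eq : ∀ k ∈ Multiset.range (n+1+1), (fun k => msum (words A k) (fun a =>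
          msum (words A (n+1-k)) (fun b => msum (shuffle a b) (fun u => F a b u)))) k
        = msum (words A k) (fun a => msum (words A (n+1-k)) (fun b =>
            msum (partA a b) (fun u => F a b u)))
          + msum (words A k) (fun a => msum (words A (n+1-k)) (fun b =>
            msum (partB a b) (fun u => F a b u))) := by
      intro k hk
      rw [← msum_add]
      refine msum_congr (fun a ha => ?_)
      rw [← msum_add]
      refine msum_congr (fun b hb => ?_)
      have hab : a ≠ [] ∨ b ≠ [] := by
        have h1 := length_of_mem_words k a ha
        have h2 := length_of_mem_words (n+1-k) b hb
        have hk' : k < n + 2 := Multiset.mem_range.mp hk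
        rcases Nat.eq_zero_or_pos k with hk0 | hk0
        · right
          subst hk0
          intro hb0
          rw [hb0] at h2
          simp at h2
        · left
          intro ha0
          rw [ha0] at h1
          simp at h1
          omega
      rw [shuffle_eq_parts a b hab, msum_addm]
    rw [msum_congr rhs_eq, msum_add]
    have hTA :
        msum (Multiset.range (n+1+1)) (fun k => msum (words A k) (fun a =>
          msum (words A (n+1-k)) (fun b => msum (partA a b) (fun u => F a b u))))
        = msum (Finset.univ.val : Multiset A) (fun y => msum (Multiset.range (n+1))
            (fun k => msum (words A k) (fun a => msum (words A (n-k))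
              (fun b => msum (shuffle a b) (fun u => F (y::a) b (y::u)))))) := by
      rw [mrange_succ', msum_cons, msum_map]
      have h0 : msum (words A 0) (fun a => msum (words A (n+1-0)) (fun b =>
          msum (partA a b) (fun u => F a b u))) = 0 := by
        show msum {([] : List A)} _ = 0
        rw [msum_singleton]
        refine Eq.trans (msum_congr (fun b _ => ?_)) (msum_zero_fun _)
        rfl
      rw [h0, zero_add]
      refine Eq.trans (msum_congr (fun k _ => ?_))
        (msum_comm (Multiset.range (n+1)) Finset.univ.val _)
      rw [show n + 1 - (k + 1) = n - k from by omega, msum_words_succ]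
      refine msum_congr (fun y _ => msum_congr (fun a _ => msum_congr (fun b _ => ?_)))
      rw [show partA (y :: a) b = (shuffle a b).map (y :: ·) from rfl, msum_map]
    have hTB :
        msum (Multiset.range (n+1+1)) (fun k => msum (words A k) (fun a =>
          msum (words A (n+1-k)) (fun b => msum (partB a b) (fun u => F a b u))))
        = msum (Finset.univ.val : Multiset A) (fun y => msum (Multiset.range (n+1))
            (fun k => msum (words A k) (fun a => msum (words A (n-k))
              (fun b => msum (shuffle a b) (fun u => F a (y::b) (y::u)))))) := by
      rw [Multiset.range_succ, msum_cons]
      have h1 : msum (words A (n+1)) (fun a => msum (words A (n+1-(n+1))) (fun b =>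
          msum (partB a b) (fun u => F a b u))) = 0 := by
        rw [Nat.sub_self]
        refine Eq.trans (msum_congr (fun a _ => ?_)) (msum_zero_fun _)
        show msum {([] : List A)} _ = 0
        rw [msum_singleton]
        rfl
      rw [h1, zero_add]
      have step : ∀ k ∈ Multiset.range (n+1),
          (fun k => msum (words A k) (fun a => msum (words A (n+1-k)) (fun b =>
            msum (partB a b) (fun u => F a b u)))) k
          = msum (Finset.univ.val : Multiset A) (fun y => msum (words A k) (fun a =>
              msum (words A (n-k)) (fun b =>
                msum (shuffle a b) (fun u => F a (y::b) (y::u))))) := by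
        intro k hk
        have hk' : k ≤ n := by
          have := Multiset.mem_range.mp hk; omega
        show msum (words A k) _ = _
        rw [show n + 1 - k = (n - k) + 1 from by omega]
        refine Eq.trans (msum_congr (fun a _ => ?_))
          (msum_comm (words A k) Finset.univ.val _)
        rw [msum_words_succ]
        refine msum_congr (fun y _ => msum_congr (fun b _ => ?_))
        rw [show partB a (y :: b) = (shuffle a b).map (y :: ·) from rfl, msum_map]
      rw [msum_congr step]
      exact msum_comm _ _ _
    rw [hTA, hTB]
end exchange

lemma msum_neg {α V : Type*} [AddCommGroup V] (s : Multiset α) (f : α → V) :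
    msum s (fun a => -f a) = -msum s f := by
  induction s using Multiset.induction_on with
  | empty => simp
  | cons a s ih => simp [ih]; abel

section main
variable {K A : Type*} [Field K] [Fintype A]

/-- The basic building block of the telescoping argument. -/
noncomputable def Phi (M : List A → K) (k m : ℕ) : FreeAlgebra K A :=
  msum (words A k) (fun a => msum (Finset.univ.val : Multiset A) (fun x =>
    msum (words A m) (fun b =>
      (msum (shuffle a b) (fun u => M (x :: u))) • wordProd K (a.reverse ++ x :: b))))

lemma Phi_zero (M : List A → K) (m : ℕ) :
    Phi (K := K) M 0 m = msum (words A (m+1)) (fun w => M w • wordProd K w) := by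
  rw [Phi, msum_words_succ]
  show msum {([] : List A)} _ = _
  rw [msum_singleton]
  refine msum_congr (fun x _ => msum_congr (fun b _ => ?_))
  rw [shuffle_nil_left, msum_singleton]
  simp

lemma Phi_succ (M : List A → K) (hM : Alternal M) (k m : ℕ) :
    Phi (K := K) M (k+1) m = - Phi (K := K) M k (m+1) := by
  rw [Phi, Phi, msum_words_succ]
  have key : ∀ (x : A) (a : List A),
      msum (Finset.univ.val : Multiset A) (fun y => msum (words A m) (fun b =>
        (msum (shuffle (x :: a) b) (fun u => M (y :: u))) •
          wordProd K ((x :: a).reverse ++ y :: b)))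
      = msum (Finset.univ.val : Multiset A) (fun y => msum (words A m) (fun b =>
          -((msum (shuffle a (y :: b)) (fun u => M (x :: u))) •
            wordProd K (a.reverse ++ x :: y :: b)))) := by
    intro x a
    refine msum_congr (fun y _ => msum_congr (fun b _ => ?_))
    have halt := hM.2 (x :: a) (y :: b) (by simp) (by simp)
    rw [show shuffle (x :: a) (y :: b)
        = (shuffle a (y :: b)).map (x :: ·) + (shuffle (x :: a) b).map (y :: ·)
        from by rw [shuffle]] at halt
    rw [show ((shuffle a (y :: b)).map (x :: ·) + (shuffle (x :: a) b).map (y :: ·)).map M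
        = ((shuffle a (y :: b)).map (x :: ·)).map M + ((shuffle (x :: a) b).map (y :: ·)).map M
        from Multiset.map_add _ _ _, Multiset.sum_add] at halt
    have h1 : msum (shuffle (x :: a) b) (fun u => M (y :: u))
        = -(msum (shuffle a (y :: b)) (fun u => M (x :: u))) := by
      have e1 : (((shuffle a (y :: b)).map (x :: ·)).map M).sum
          = msum (shuffle a (y :: b)) (fun u => M (x :: u)) := by
        rw [Multiset.map_map]; rfl
      have e2 : (((shuffle (x :: a) b).map (y :: ·)).map M).sum
          = msum (shuffle (x :: a) b) (fun u => M (y :: u)) := by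
        rw [Multiset.map_map]; rfl
      rw [e1, e2] at halt
      exact eq_neg_of_add_eq_zero_right halt
    rw [h1, neg_smul]
    congr 2
    simp [List.append_assoc]
  rw [msum_congr (fun x _ => msum_congr (fun a _ => key x a))]
  simp only [msum_neg]
  rw [neg_inj, msum_comm]
  refine msum_congr (fun a _ => msum_congr (fun x _ => ?_))
  rw [msum_words_succ]

lemma Phi_eq (M : List A → K) (hM : Alternal M) (k m : ℕ) :
    Phi (K := K) M k m = ((-1 : K)^k) • Phi (K := K) M 0 (k + m) := by
  induction k generalizing m with
  | zero => simp
  | succ k ih =>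
    rw [Phi_succ M hM, ih (m+1), show k + 1 + m = k + (m + 1) from by omega, pow_succ]
    rw [mul_comm ((-1:K)^k) (-1), mul_smul, neg_one_smul]

end main

section assemble
variable {K A : Type*} [Field K] [Fintype A]

lemma dynkin_sum (M : List A → K) (n : ℕ) :
    msum (words A (n+1)) (fun w => M w • dynkinBracket K w)
      = msum (Multiset.range (n+1)) (fun k => ((-1:K)^k) • Phi (K := K) M k (n-k)) := by
  rw [msum_words_succ]
  have expand : ∀ x : A,
      msum (words A n) (fun t => M (x :: t) • dynkinBracket K (x :: t))
      = msum (Multiset.range (n+1)) (fun k => msum (words A k) (fun a =>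
          msum (words A (n-k)) (fun b => msum (shuffle a b) (fun u =>
            M (x :: u) • (((-1:K)^a.length) • wordProd K (a.reverse ++ x :: b)))))) := by
    intro x
    rw [← splits_to_shuffles n (fun a b t =>
      M (x :: t) • (((-1:K)^a.length) • wordProd K (a.reverse ++ x :: b)))]
    refine msum_congr (fun t _ => ?_)
    rw [dynkin_expand, ← msum_smul]
  rw [msum_congr (fun x _ => expand x), msum_comm]
  refine msum_congr (fun k hk => ?_)
  rw [Phi, ← msum_smul, msum_comm]
  refine msum_congr (fun a ha => ?_)
  have hlen := length_of_mem_words k a ha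
  rw [← msum_smul]
  refine msum_congr (fun x _ => ?_)
  rw [← msum_smul]
  refine msum_congr (fun b _ => ?_)
  rw [hlen, ← msum_smul_const, ← msum_smul]
  exact msum_congr (fun u _ => smul_comm _ _ _)

end assemble


/-- projection lemma consequence: for an alternal mould `M`, in each
homogeneous degree `r ≥ 1` the element `Σ_a M^a a` coincides with its image under the
Dynkin-type map `ψ(a₁⋯a_r) = (1/r)[[⋯[a₁,a₂],⋯],a_r]`. -/
theorem alternal_projection {K A : Type*} [Field K] [CharZero K] [Fintype A]
    (M : List A → K) (hM : Alternal M) (r : ℕ) (hr : 1 ≤ r) :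
    ∑ f : Fin r → A, M (List.ofFn f) • wordProd K (List.ofFn f) =
      (r : K)⁻¹ • ∑ f : Fin r → A, M (List.ofFn f) • dynkinBracket K (List.ofFn f) := by
  obtain ⟨n, rfl⟩ : ∃ n, r = n + 1 := ⟨r - 1, by omega⟩
  rw [sum_eq_msum_words (n+1) (fun w => M w • wordProd K w),
    sum_eq_msum_words (n+1) (fun w => M w • dynkinBracket K w)]
  have main : msum (words A (n+1)) (fun w => M w • dynkinBracket K w)
      = ((n+1 : ℕ) : K) • msum (words A (n+1)) (fun w => M w • wordProd K w) := by
    rw [dynkin_sum M n]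
    have e : ∀ k ∈ Multiset.range (n+1), (fun k => ((-1:K)^k) • Phi (K := K) M k (n-k)) k
        = msum (words A (n+1)) (fun w => M w • wordProd K w) := by
      intro k hk
      have hk' : k < n + 1 := Multiset.mem_range.mp hk
      show ((-1:K)^k) • Phi (K := K) M k (n-k) = _
      rw [Phi_eq M hM, smul_smul, ← mul_pow, neg_mul_neg, one_mul, one_pow, one_smul]
      rw [show k + (n - k) = n from by omega, Phi_zero]
    rw [msum_congr e, msum_range_const, ← Nat.cast_smul_eq_nsmul K]
  rw [main, inv_smul_smul₀ (Nat.cast_ne_zero.mpr (by omega : n + 1 ≠ 0))]
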